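/- Suppose u ∈ C_{+,log} is increasing and (log, x^k)-convex for some k > 0. Then for any a > 1 and all r ≥ 0, L_u(r) ≤ √(ℓ_u(0) · ea/log a) · u(a 2^{k+1} r)^{1/2}, where L_u(r) = Σ_{n=0}^∞ ℓ_u(n) r^n. -/
import Mathlib


noncomputable def ell (u : ℝ → ℝ) (t : ℝ) : ℝ :=
  ⨅ r : {r : ℝ // 0 < r}, u r / (r : ℝ) ^ t

lemma ell_bddBelow (u : ℝ → ℝ) (t : ℝ) (hpos : ∀ r ≥ 0, 0 < u r) :
    BddBelow (Set.range fun r : {r : ℝ // 0 < r} => u r / (r : ℝ) ^ t) := by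
  refine ⟨0, ?_⟩
  rintro x ⟨⟨ρ, hρ⟩, rfl⟩
  exact le_of_lt (div_pos (hpos ρ hρ.le) (Real.rpow_pos_of_pos hρ t))

lemma ell_nonneg (u : ℝ → ℝ) (t : ℝ) (hpos : ∀ r ≥ 0, 0 < u r) : 0 ≤ ell u t :=
  le_ciInf fun ⟨ρ, hρ⟩ => le_of_lt (div_pos (hpos ρ hρ.le) (Real.rpow_pos_of_pos hρ t))

lemma ell_le (u : ℝ → ℝ) (t : ℝ) (hpos : ∀ r ≥ 0, 0 < u r) {ρ : ℝ} (hρ : 0 < ρ) :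
    ell u t ≤ u ρ / ρ ^ t :=
  ciInf_le (ell_bddBelow u t hpos) ⟨ρ, hρ⟩

lemma ell_zero_le (u : ℝ → ℝ) (hpos : ∀ r ≥ 0, 0 < u r) {ρ : ℝ} (hρ : 0 < ρ) :
    ell u 0 ≤ u ρ := by
  have h := ell_le u 0 hpos hρ
  rwa [Real.rpow_zero, div_one] at h

/-- Key inequality from (log, x^k)-convexity plus monotonicity:
`u(x/2^k)^2 ≤ ℓ_u(0) · u(x)`. -/
lemma key_sq (u : ℝ → ℝ) (k : ℝ) (hk : 0 < k)
    (hpos : ∀ r ≥ 0, 0 < u r)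
    (hmono : MonotoneOn u (Set.Ici 0))
    (hconv : ConvexOn ℝ (Set.Ici 0) (fun x : ℝ => Real.log (u (x ^ k))))
    {x : ℝ} (hx : 0 < x) :
    (u (x / 2 ^ (k : ℝ))) ^ 2 ≤ ell u 0 * u x := by
  have hux : 0 < u x := hpos x hx.le
  have h2k : (0:ℝ) < 2 ^ (k : ℝ) := Real.rpow_pos_of_pos two_pos k
  have main : ∀ ε > (0:ℝ), (u (x / 2 ^ (k:ℝ))) ^ 2 ≤ u ε * u x := by
    intro ε hε
    set s := ε ^ k⁻¹ with hs
    set t := x ^ k⁻¹ with ht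
    have hs0 : 0 < s := Real.rpow_pos_of_pos hε _
    have ht0 : 0 < t := Real.rpow_pos_of_pos hx _
    have hsk : s ^ (k:ℝ) = ε := Real.rpow_inv_rpow hε.le hk.ne'
    have htk : t ^ (k:ℝ) = x := Real.rpow_inv_rpow hx.le hk.ne'
    -- convexity at the midpoint
    have hcv := hconv.2 (Set.mem_Ici.2 hs0.le) (Set.mem_Ici.2 ht0.le)
      (by norm_num : (0:ℝ) ≤ 1/2) (by norm_num : (0:ℝ) ≤ 1/2) (by norm_num)
    simp only [smul_eq_mul] at hcv
    have hmid : (1/2 : ℝ) * s + (1/2 : ℝ) * t = (s + t) / 2 := by ring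
    rw [hmid, hsk, htk] at hcv
    set m := ((s + t) / 2) ^ (k:ℝ) with hm
    have hm0 : 0 < m := Real.rpow_pos_of_pos (by positivity) _
    have hum : 0 < u m := hpos m hm0.le
    have huε : 0 < u ε := hpos ε hε.le
    -- exponentiate
    have hlog : Real.log ((u m) ^ 2) ≤ Real.log (u ε * u x) := by
      rw [Real.log_pow, Real.log_mul huε.ne' hux.ne']
      push_cast
      linarith
    have humsq : (u m) ^ 2 ≤ u ε * u x := by
      have := Real.exp_le_exp.2 hlog
      rwa [Real.exp_log (by positivity), Real.exp_log (by positivity)] at this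
    -- u(x/2^k) ≤ u m
    have hle : x / 2 ^ (k:ℝ) ≤ m := by
      have h1 : (t / 2) ^ (k:ℝ) = x / 2 ^ (k:ℝ) := by
        rw [Real.div_rpow ht0.le (by norm_num : (0:ℝ) ≤ 2), htk]
      have h2 : (t / 2) ^ (k:ℝ) ≤ ((s + t) / 2) ^ (k:ℝ) :=
        Real.rpow_le_rpow (by positivity) (by linarith) hk.le
      rw [← h1]; exact h2
    have hux2 : u (x / 2 ^ (k:ℝ)) ≤ u m :=
      hmono (Set.mem_Ici.2 (by positivity)) (Set.mem_Ici.2 hm0.le) hle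
    have hnn : 0 ≤ u (x / 2 ^ (k:ℝ)) := (hpos _ (by positivity)).le
    calc (u (x / 2 ^ (k:ℝ))) ^ 2 ≤ (u m) ^ 2 := by nlinarith
      _ ≤ u ε * u x := humsq
  -- take infimum over ε
  have hdiv : (u (x / 2 ^ (k:ℝ))) ^ 2 / u x ≤ ell u 0 := by
    refine le_ciInf fun ⟨ε, hε⟩ => ?_
    show (u (x / 2 ^ (k:ℝ))) ^ 2 / u x ≤ u ε / (ε:ℝ) ^ (0:ℝ)
    rw [Real.rpow_zero, div_one]
    exact (div_le_iff₀ hux).2 (main ε hε)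
  calc (u (x / 2 ^ (k:ℝ))) ^ 2 = (u (x / 2 ^ (k:ℝ))) ^ 2 / u x * u x := by
        field_simp
    _ ≤ ell u 0 * u x := mul_le_mul_of_nonneg_right hdiv hux.le

theorem L_function_sqrt_bound (u : ℝ → ℝ) (k : ℝ) (hk : 0 < k)
    (hpos : ∀ r ≥ 0, 0 < u r)
    (hcont : ContinuousOn u (Set.Ici 0))
    (hlim : Filter.Tendsto (fun r => Real.log (u r) / Real.log r)
      Filter.atTop Filter.atTop)
    (hmono : MonotoneOn u (Set.Ici 0))
    (hconv : ConvexOn ℝ (Set.Ici 0) (fun x : ℝ => Real.log (u (x ^ k)))) :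
    ∀ a > (1 : ℝ), ∀ r ≥ (0 : ℝ),
      (∑' n : ℕ, ell u n * r ^ n)
        ≤ Real.sqrt (ell u 0 * (Real.exp 1 * a / Real.log a))
            * Real.sqrt (u (a * (2 : ℝ) ^ (k + 1) * r)) := by
  intro a ha r hr
  have ha0 : (0:ℝ) < a := lt_trans one_pos ha
  have hloga : 0 < Real.log a := Real.log_pos ha
  have hl0 : 0 ≤ ell u 0 := ell_nonneg u 0 hpos
  set C := Real.exp 1 * a / Real.log a with hC
  -- C ≥ 4
  have hC4 : (4:ℝ) ≤ C := by
    rw [hC, le_div_iff₀ hloga]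
    have h1 : Real.log a ≤ a / Real.exp 1 := by
      have h2 : Real.log a - 1 + 1 ≤ Real.exp (Real.log a - 1) := Real.add_one_le_exp _
      have h3 : Real.exp (Real.log a - 1) = a / Real.exp 1 := by
        rw [Real.exp_sub, Real.exp_log ha0]
      rw [h3] at h2; linarith
    have he : (2.7182818283:ℝ) < Real.exp 1 := Real.exp_one_gt_d9
    have hepos : (0:ℝ) < Real.exp 1 := Real.exp_pos 1
    rw [le_div_iff₀ hepos] at h1
    nlinarith
  have hC1 : (1:ℝ) ≤ C := by linarith
  have hC0 : (0:ℝ) ≤ C := by linarith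
  rcases eq_or_lt_of_le hr with h0 | hr0
  · -- case r = 0
    have hr0 : r = 0 := h0.symm
    subst hr0
    have htsum : (∑' n : ℕ, ell u (n:ℝ) * (0:ℝ) ^ n) = ell u 0 := by
      rw [tsum_eq_single 0 (fun n hn => by simp [zero_pow hn])]
      simp
    rw [htsum, mul_zero]
    -- ell u 0 ≤ u 0 by continuity
    have hl0u : ell u 0 ≤ u 0 := by
      have htends : Filter.Tendsto u (nhdsWithin 0 (Set.Ioi 0)) (nhds (u 0)) :=
        ((hcont 0 (by simp : (0:ℝ) ∈ Set.Ici 0)).mono_left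
          (nhdsWithin_mono 0 Set.Ioi_subset_Ici_self))
      exact ge_of_tendsto htends (Filter.eventually_of_mem self_mem_nhdsWithin
        (fun ε hε => ell_zero_le u hpos hε))
    have hu0 : 0 ≤ u 0 := (hpos 0 le_rfl).le
    calc ell u 0 = Real.sqrt (ell u 0) * Real.sqrt (ell u 0) :=
          (Real.mul_self_sqrt hl0).symm
      _ ≤ Real.sqrt (ell u 0 * C) * Real.sqrt (u 0) := by
          apply mul_le_mul
          · exact Real.sqrt_le_sqrt (le_mul_of_one_le_right hl0 hC1)
          · exact Real.sqrt_le_sqrt hl0u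
          · exact Real.sqrt_nonneg _
          · exact Real.sqrt_nonneg _
  · -- case r > 0
    set X := a * (2:ℝ) ^ (k + 1) * r with hXdef
    have h2k : (0:ℝ) < (2:ℝ) ^ (k:ℝ) := Real.rpow_pos_of_pos two_pos k
    have h2k1 : (2:ℝ) ^ (k + 1) = 2 ^ (k:ℝ) * 2 := by
      rw [Real.rpow_add two_pos, Real.rpow_one]
    have hX : 0 < X := by
      rw [hXdef, h2k1]; positivity
    have hXrew : X / 2 ^ (k:ℝ) = 2 * a * r := by
      rw [hXdef, h2k1]; field_simp
    have huX : 0 < u X := hpos X hX.le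
    set ρ := 2 * a * r with hρdef
    have hρ : 0 < ρ := by positivity
    have hkey : (u ρ) ^ 2 ≤ ell u 0 * u X := by
      have := key_sq u k hk hpos hmono hconv hX
      rwa [hXrew] at this
    set M := Real.sqrt (ell u 0 * u X) with hM
    have hM0 : 0 ≤ M := Real.sqrt_nonneg _
    have huρM : u ρ ≤ M := by
      rw [hM, ← Real.sqrt_sq (hpos ρ hρ.le).le]
      exact Real.sqrt_le_sqrt hkey
    set q := 1 / (2 * a) with hq
    have hq0 : (0:ℝ) ≤ q := by positivity
    have hq1 : q < 1 := by
      rw [hq, div_lt_one (by linarith)]; linarith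
    have hqhalf : q ≤ 1/2 := by
      rw [hq, div_le_div_iff₀ (by linarith) (by norm_num)]; linarith
    -- termwise bound
    have hterm : ∀ n : ℕ, ell u (n:ℝ) * r ^ n ≤ M * q ^ n := by
      intro n
      have h1 : ell u (n:ℝ) ≤ u ρ / ρ ^ n := by
        have := ell_le u (n:ℝ) hpos hρ
        rwa [Real.rpow_natCast] at this
      have h2 : ell u (n:ℝ) * r ^ n ≤ u ρ / ρ ^ n * r ^ n :=
        mul_le_mul_of_nonneg_right h1 (pow_nonneg hr n)
      have h3 : u ρ / ρ ^ n * r ^ n = u ρ * q ^ n := by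
        rw [div_mul_eq_mul_div, mul_div_assoc, ← div_pow, hq, hρdef]
        congr 2
        field_simp
      rw [h3] at h2
      exact h2.trans (mul_le_mul_of_nonneg_right huρM (pow_nonneg hq0 n))
    have hgeom : Summable (fun n : ℕ => M * q ^ n) :=
      (summable_geometric_of_lt_one hq0 hq1).mul_left M
    have hsum : Summable (fun n : ℕ => ell u (n:ℝ) * r ^ n) :=
      Summable.of_nonneg_of_le
        (fun n => mul_nonneg (ell_nonneg u _ hpos) (pow_nonneg (le_of_lt hr0) n))
        hterm hgeom
    have htsum_le : (∑' n : ℕ, ell u (n:ℝ) * r ^ n) ≤ M * (1 - q)⁻¹ := by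
      calc (∑' n : ℕ, ell u (n:ℝ) * r ^ n) ≤ ∑' n : ℕ, M * q ^ n :=
            Summable.tsum_le_tsum hterm hsum hgeom
        _ = M * (1 - q)⁻¹ := by
            rw [tsum_mul_left, tsum_geometric_of_lt_one hq0 hq1]
    have hfinal : M * (1 - q)⁻¹ ≤ Real.sqrt (ell u 0 * C) * Real.sqrt (u X) := by
      have hinv : (1 - q)⁻¹ ≤ 2 := by
        rw [inv_le_comm₀ (by linarith) (by norm_num)]
        linarith
      have hMsplit : M = Real.sqrt (ell u 0) * Real.sqrt (u X) := by
        rw [hM, Real.sqrt_mul hl0]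
      have hCsplit : Real.sqrt (ell u 0 * C) = Real.sqrt (ell u 0) * Real.sqrt C := by
        rw [Real.sqrt_mul hl0]
      have h2C : (2:ℝ) ≤ Real.sqrt C := by
        have : (2:ℝ) = Real.sqrt 4 := by
          rw [show (4:ℝ) = 2^2 by norm_num, Real.sqrt_sq (by norm_num : (0:ℝ) ≤ 2)]
        rw [this]
        exact Real.sqrt_le_sqrt hC4
      calc M * (1 - q)⁻¹ ≤ M * 2 := mul_le_mul_of_nonneg_left hinv hM0
        _ = Real.sqrt (ell u 0) * Real.sqrt (u X) * 2 := by rw [hMsplit]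
        _ ≤ Real.sqrt (ell u 0) * Real.sqrt (u X) * Real.sqrt C := by
            apply mul_le_mul_of_nonneg_left h2C
            positivity
        _ = Real.sqrt (ell u 0 * C) * Real.sqrt (u X) := by
            rw [hCsplit]; ring
    exact htsum_le.trans hfinal
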